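/- arXiv:1405.0480 — 4 statements merged into one kernel-verified Lean document; each statement's English description precedes it below -/
import Mathlib

section
/- Let Q₁ = N(μ₁, σ₁²) and Q₂ = N(μ₂, σ₂²) be Gaussian measures on ℝ with σ₁, σ₂ > 0. Then ‖Q₁ - Q₂‖_TV ≤ √((1 - σ₁/σ₂)² + (μ₁ - μ₂)²/(2σ₂²)). -/
/-!
Le Cam's inequality bounds the total variation distance of two probability densities `f`, `g` by
`√(1 - ρ²)`, where `ρ = ∫ √f √g` is their Bhattacharyya coefficient: `|P A - Q A| ≤ ½ ∫ |f - g|`,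
and writing `f - g = (√f - √g) (√f + √g)`, Cauchy–Schwarz gives
`∫ |f - g| ≤ √(2 - 2ρ) √(2 + 2ρ)`.

For two Gaussians, completing the square in `√(f g)` gives `ρ² = u e^{-y}` with
`u = 2σ₁σ₂ / (σ₁² + σ₂²)` and `y = (μ₁ - μ₂)² / (2 (σ₁² + σ₂²))`. Then
`1 - u e^{-y} ≤ (1 - u) + y`, where `1 - u = (σ₁ - σ₂)² / (σ₁² + σ₂²) ≤ (1 - σ₁/σ₂)²` and
`y ≤ (μ₁ - μ₂)² / (2 σ₂²)`.
-/

open MeasureTheory ProbabilityTheory Real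

/-- Total variation distance `‖P - Q‖_TV = sup_A |P(A) - Q(A)|`. -/
noncomputable def tvDist {α : Type*} [MeasurableSpace α] (P Q : Measure α) : ℝ :=
  ⨆ A : {A : Set α // MeasurableSet A}, |(P A.1).toReal - (Q A.1).toReal|

open scoped NNReal

section Densities

variable {α : Type*} [MeasurableSpace α] {μ : Measure α} {f g : α → ℝ}

lemma abs_setIntegral_sub_le_half_integral_abs_sub (hf : Integrable f μ) (hg : Integrable g μ)
    (hfg : ∫ x, f x ∂μ = ∫ x, g x ∂μ) {A : Set α} (hA : MeasurableSet A) :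
    |∫ x in A, f x ∂μ - ∫ x in A, g x ∂μ| ≤ (∫ x, |f x - g x| ∂μ) / 2 := by
  have hh : Integrable (fun x => f x - g x) μ := hf.sub hg
  have h_split : ∫ x in A, (f x - g x) ∂μ = -∫ x in Aᶜ, (f x - g x) ∂μ := by
    have := integral_add_compl hA hh
    rw [integral_sub hf hg, hfg, sub_self] at this
    linarith
  have hA_le := abs_integral_le_integral_abs (f := fun x => f x - g x) (μ := μ.restrict A)
  have hAc_le := abs_integral_le_integral_abs (f := fun x => f x - g x) (μ := μ.restrict Aᶜ)
  rw [← integral_sub hf.integrableOn hg.integrableOn, ← integral_add_compl hA hh.abs, h_split,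
    abs_neg]
  rw [h_split, abs_neg] at hA_le
  linarith

lemma integral_mul_le_sqrt_mul_sqrt {a b : α → ℝ} (ha₀ : 0 ≤ a) (hb₀ : 0 ≤ b)
    (ha : AEStronglyMeasurable a μ) (hb : AEStronglyMeasurable b μ)
    (ha₂ : Integrable (fun x => a x ^ 2) μ) (hb₂ : Integrable (fun x => b x ^ 2) μ) :
    ∫ x, a x * b x ∂μ ≤ √(∫ x, a x ^ 2 ∂μ) * √(∫ x, b x ^ 2 ∂μ) := by
  have h := integral_mul_le_Lp_mul_Lq_of_nonneg Real.HolderConjugate.two_two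
    (ae_of_all _ ha₀) (ae_of_all _ hb₀)
    (by simpa using (memLp_two_iff_integrable_sq ha).2 ha₂)
    (by simpa using (memLp_two_iff_integrable_sq hb).2 hb₂)
  simpa only [Real.rpow_two, Real.sqrt_eq_rpow] using h

lemma integrable_sqrt_mul_sqrt (hf : Integrable f μ) (hg : Integrable g μ)
    (hf₀ : 0 ≤ f) (hg₀ : 0 ≤ g) : Integrable (fun x => √(f x) * √(g x)) μ := by
  refine ((hf.add hg).div_const 2).mono' ((continuous_sqrt.comp_aestronglyMeasurable hf.1).mul
    (continuous_sqrt.comp_aestronglyMeasurable hg.1)) (ae_of_all _ fun x => ?_)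
  rw [Real.norm_of_nonneg (by positivity), Pi.add_apply]
  nlinarith [sq_nonneg (√(f x) - √(g x)), Real.sq_sqrt (hf₀ x), Real.sq_sqrt (hg₀ x)]

lemma integral_abs_sub_le_two_mul_sqrt_one_sub_sq (hf : Integrable f μ) (hg : Integrable g μ)
    (hf₀ : 0 ≤ f) (hg₀ : 0 ≤ g) (hf₁ : ∫ x, f x ∂μ = 1) (hg₁ : ∫ x, g x ∂μ = 1) :
    ∫ x, |f x - g x| ∂μ ≤ 2 * √(1 - (∫ x, √(f x) * √(g x) ∂μ) ^ 2) := by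
  set ρ := ∫ x, √(f x) * √(g x) ∂μ
  have hρ : Integrable (fun x => √(f x) * √(g x)) μ := integrable_sqrt_mul_sqrt hf hg hf₀ hg₀
  have hu := continuous_sqrt.comp_aestronglyMeasurable hf.1
  have hw := continuous_sqrt.comp_aestronglyMeasurable hg.1
  have hfg : Integrable (fun x => f x + g x) μ := hf.add hg
  have h_sub : (fun x => (√(f x) - √(g x)) ^ 2) =
      fun x => f x + g x - 2 * (√(f x) * √(g x)) := by
    ext x; nlinarith [Real.sq_sqrt (hf₀ x), Real.sq_sqrt (hg₀ x)]
  have h_add : (fun x => (√(f x) + √(g x)) ^ 2) =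
      fun x => f x + g x + 2 * (√(f x) * √(g x)) := by
    ext x; nlinarith [Real.sq_sqrt (hf₀ x), Real.sq_sqrt (hg₀ x)]
  have h_sub_int : Integrable (fun x => (√(f x) - √(g x)) ^ 2) μ :=
    h_sub ▸ hfg.sub (hρ.const_mul 2)
  have h_add_int : Integrable (fun x => (√(f x) + √(g x)) ^ 2) μ :=
    h_add ▸ hfg.add (hρ.const_mul 2)
  have h_sub_eq : ∫ x, (√(f x) - √(g x)) ^ 2 ∂μ = 2 - 2 * ρ := by
    rw [h_sub, integral_sub hfg (hρ.const_mul 2), integral_add hf hg, integral_const_mul,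
      hf₁, hg₁]
    ring
  have h_add_eq : ∫ x, (√(f x) + √(g x)) ^ 2 ∂μ = 2 + 2 * ρ := by
    rw [h_add, integral_add hfg (hρ.const_mul 2), integral_add hf hg, integral_const_mul,
      hf₁, hg₁]
    ring
  have hρ_le : ρ ≤ 1 := by
    linarith [h_sub_eq ▸ integral_nonneg fun x => sq_nonneg (√(f x) - √(g x))]
  calc ∫ x, |f x - g x| ∂μ = ∫ x, |√(f x) - √(g x)| * (√(f x) + √(g x)) ∂μ := by
        refine integral_congr_ae (ae_of_all _ fun x => ?_)
        dsimp only
        rw [← abs_of_nonneg (by positivity : 0 ≤ √(f x) + √(g x)), ← abs_mul, mul_comm,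
          ← sq_sub_sq, Real.sq_sqrt (hf₀ x), Real.sq_sqrt (hg₀ x)]
    _ ≤ √(∫ x, |√(f x) - √(g x)| ^ 2 ∂μ) * √(∫ x, (√(f x) + √(g x)) ^ 2 ∂μ) :=
        integral_mul_le_sqrt_mul_sqrt (fun x => abs_nonneg _) (fun x => by positivity)
          (continuous_abs.comp_aestronglyMeasurable (hu.sub hw)) (hu.add hw)
          (by simpa only [sq_abs] using h_sub_int) h_add_int
    _ = 2 * √(1 - ρ ^ 2) := by
        simp only [sq_abs]
        rw [h_sub_eq, h_add_eq, ← Real.sqrt_mul (by linarith),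
          show (2 - 2 * ρ) * (2 + 2 * ρ) = 2 ^ 2 * (1 - ρ ^ 2) by ring,
          Real.sqrt_mul (by positivity), Real.sqrt_sq zero_le_two]

lemma toReal_withDensity_ofReal_apply (hf : Integrable f μ) (hf₀ : 0 ≤ f) {A : Set α}
    (hA : MeasurableSet A) :
    ((μ.withDensity fun x => ENNReal.ofReal (f x)) A).toReal = ∫ x in A, f x ∂μ := by
  rw [withDensity_apply _ hA, ← ofReal_integral_eq_lintegral_ofReal hf.integrableOn
    (ae_of_all _ hf₀), ENNReal.toReal_ofReal (setIntegral_nonneg hA fun x _ => hf₀ x)]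

theorem tvDist_withDensity_le_sqrt_one_sub_sq (hf : Integrable f μ) (hg : Integrable g μ)
    (hf₀ : 0 ≤ f) (hg₀ : 0 ≤ g) (hf₁ : ∫ x, f x ∂μ = 1) (hg₁ : ∫ x, g x ∂μ = 1) :
    tvDist (μ.withDensity fun x => ENNReal.ofReal (f x))
        (μ.withDensity fun x => ENNReal.ofReal (g x)) ≤
      √(1 - (∫ x, √(f x) * √(g x) ∂μ) ^ 2) := by
  have : Nonempty {A : Set α // MeasurableSet A} := ⟨⟨∅, .empty⟩⟩
  refine ciSup_le fun ⟨A, hA⟩ => ?_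
  rw [toReal_withDensity_ofReal_apply hf hf₀ hA, toReal_withDensity_ofReal_apply hg hg₀ hA]
  calc _ ≤ (∫ x, |f x - g x| ∂μ) / 2 :=
        abs_setIntegral_sub_le_half_integral_abs_sub hf hg (hf₁.trans hg₁.symm) hA
    _ ≤ _ := by linarith [integral_abs_sub_le_two_mul_sqrt_one_sub_sq hf hg hf₀ hg₀ hf₁ hg₁]

end Densities

-- `rw [gaussianPDFReal_def]` fails at the variance `⟨σ ^ 2, _⟩`, whose elaborated type is the
-- subtype `{r // 0 ≤ r}` rather than `ℝ≥0`; this lemma is stated at that exact term instead.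
lemma gaussianPDFReal_mk_sq (μ σ x : ℝ) :
    gaussianPDFReal μ ⟨σ ^ 2, sq_nonneg σ⟩ x =
      (√(2 * π * σ ^ 2))⁻¹ * exp (-(x - μ) ^ 2 / (2 * σ ^ 2)) :=
  rfl

lemma sqrt_gaussianPDFReal_mul_sqrt_gaussianPDFReal (μ₁ μ₂ : ℝ) {σ₁ σ₂ : ℝ} (hσ₁ : 0 < σ₁)
    (hσ₂ : 0 < σ₂) (x : ℝ) :
    √(gaussianPDFReal μ₁ ⟨σ₁ ^ 2, sq_nonneg σ₁⟩ x) *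
        √(gaussianPDFReal μ₂ ⟨σ₂ ^ 2, sq_nonneg σ₂⟩ x) =
      √(1 / (2 * π * σ₁ * σ₂)) * exp (-(μ₁ - μ₂) ^ 2 / (4 * (σ₁ ^ 2 + σ₂ ^ 2))) *
        exp (-((σ₁ ^ 2 + σ₂ ^ 2) / (4 * σ₁ ^ 2 * σ₂ ^ 2)) *
          (x - (σ₂ ^ 2 * μ₁ + σ₁ ^ 2 * μ₂) / (σ₁ ^ 2 + σ₂ ^ 2)) ^ 2) := by
  have hc : ∀ a : ℝ, 0 ≤ (√a)⁻¹ := fun a => inv_nonneg.2 (Real.sqrt_nonneg a)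
  rw [gaussianPDFReal_mk_sq, gaussianPDFReal_mk_sq, Real.sqrt_mul (hc _), Real.sqrt_mul (hc _),
    ← exp_half, ← exp_half,
    mul_mul_mul_comm, ← Real.sqrt_mul (by positivity), ← mul_inv, ← Real.sqrt_mul (by positivity),
    show 2 * π * σ₁ ^ 2 * (2 * π * σ₂ ^ 2) = (2 * π * σ₁ * σ₂) ^ 2 by ring,
    Real.sqrt_sq (by positivity), ← exp_add, mul_assoc _ (rexp _), ← exp_add, inv_eq_one_div]
  congr 2
  field_simp
  ring

lemma integral_sqrt_gaussianPDFReal_mul_sqrt_gaussianPDFReal (μ₁ μ₂ : ℝ) {σ₁ σ₂ : ℝ}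
    (hσ₁ : 0 < σ₁) (hσ₂ : 0 < σ₂) :
    ∫ x, √(gaussianPDFReal μ₁ ⟨σ₁ ^ 2, sq_nonneg σ₁⟩ x) *
        √(gaussianPDFReal μ₂ ⟨σ₂ ^ 2, sq_nonneg σ₂⟩ x) =
      √(2 * σ₁ * σ₂ / (σ₁ ^ 2 + σ₂ ^ 2)) * exp (-(μ₁ - μ₂) ^ 2 / (4 * (σ₁ ^ 2 + σ₂ ^ 2))) := by
  rw [integral_congr_ae (ae_of_all _ (sqrt_gaussianPDFReal_mul_sqrt_gaussianPDFReal μ₁ μ₂ hσ₁ hσ₂)),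
    integral_const_mul, integral_sub_right_eq_self (fun y => exp (-_ * y ^ 2)), integral_gaussian,
    mul_right_comm, ← Real.sqrt_mul (by positivity)]
  congr 2
  field_simp
  ring

lemma one_sub_mul_exp_neg_le {u y : ℝ} (hu₀ : 0 ≤ u) (hu₁ : u ≤ 1) (hy : 0 ≤ y) :
    1 - u * exp (-y) ≤ 1 - u + y := by
  nlinarith [add_one_le_exp (-y)]

lemma one_sub_sq_gaussianBhattacharyya_le (μ₁ μ₂ : ℝ) {σ₁ σ₂ : ℝ} (hσ₁ : 0 < σ₁) (hσ₂ : 0 < σ₂) :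
    1 - (√(2 * σ₁ * σ₂ / (σ₁ ^ 2 + σ₂ ^ 2)) * exp (-(μ₁ - μ₂) ^ 2 / (4 * (σ₁ ^ 2 + σ₂ ^ 2)))) ^ 2 ≤
      (1 - σ₁ / σ₂) ^ 2 + (μ₁ - μ₂) ^ 2 / (2 * σ₂ ^ 2) := by
  have hS : σ₂ ^ 2 ≤ σ₁ ^ 2 + σ₂ ^ 2 := le_add_of_nonneg_left (sq_nonneg σ₁)
  have h_sq : (√(2 * σ₁ * σ₂ / (σ₁ ^ 2 + σ₂ ^ 2)) *
      exp (-(μ₁ - μ₂) ^ 2 / (4 * (σ₁ ^ 2 + σ₂ ^ 2)))) ^ 2 =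
      2 * σ₁ * σ₂ / (σ₁ ^ 2 + σ₂ ^ 2) * exp (-((μ₁ - μ₂) ^ 2 / (2 * (σ₁ ^ 2 + σ₂ ^ 2)))) := by
    rw [mul_pow, sq_sqrt (by positivity), ← exp_nat_mul]
    congr 2
    field_simp
    ring
  have h_one_sub : 1 - 2 * σ₁ * σ₂ / (σ₁ ^ 2 + σ₂ ^ 2) = (σ₁ - σ₂) ^ 2 / (σ₁ ^ 2 + σ₂ ^ 2) := by
    field_simp
    ring
  have h_ratio : (1 - σ₁ / σ₂) ^ 2 = (σ₁ - σ₂) ^ 2 / σ₂ ^ 2 := by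
    field_simp
    ring
  rw [h_sq]
  refine (one_sub_mul_exp_neg_le (by positivity) ?_ (by positivity)).trans ?_
  · exact sub_nonneg.1 (h_one_sub ▸ by positivity)
  · rw [h_one_sub, h_ratio]
    gcongr

/-- `‖N(μ₁,σ₁²) - N(μ₂,σ₂²)‖_TV ≤ √((1 - σ₁/σ₂)² + (μ₁-μ₂)²/(2σ₂²))`. -/
theorem tvDist_gaussianReal_le (μ₁ μ₂ σ₁ σ₂ : ℝ) (hσ₁ : 0 < σ₁) (hσ₂ : 0 < σ₂) :
    tvDist (gaussianReal μ₁ ⟨σ₁ ^ 2, sq_nonneg σ₁⟩)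
        (gaussianReal μ₂ ⟨σ₂ ^ 2, sq_nonneg σ₂⟩) ≤
      Real.sqrt ((1 - σ₁ / σ₂) ^ 2 + (μ₁ - μ₂) ^ 2 / (2 * σ₂ ^ 2)) := by
  have hv₁ : (⟨σ₁ ^ 2, sq_nonneg σ₁⟩ : ℝ≥0) ≠ 0 := fun h =>
    (pow_pos hσ₁ 2).ne' congr(NNReal.toReal $h)
  have hv₂ : (⟨σ₂ ^ 2, sq_nonneg σ₂⟩ : ℝ≥0) ≠ 0 := fun h =>
    (pow_pos hσ₂ 2).ne' congr(NNReal.toReal $h)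
  rw [gaussianReal_of_var_ne_zero μ₁ hv₁, gaussianReal_of_var_ne_zero μ₂ hv₂]
  calc _ ≤ √(1 - (∫ x, √(gaussianPDFReal μ₁ ⟨σ₁ ^ 2, sq_nonneg σ₁⟩ x) *
          √(gaussianPDFReal μ₂ ⟨σ₂ ^ 2, sq_nonneg σ₂⟩ x)) ^ 2) :=
        tvDist_withDensity_le_sqrt_one_sub_sq (integrable_gaussianPDFReal _ _)
          (integrable_gaussianPDFReal _ _) (gaussianPDFReal_nonneg _ _)
          (gaussianPDFReal_nonneg _ _) (integral_gaussianPDFReal_eq_one _ hv₁)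
          (integral_gaussianPDFReal_eq_one _ hv₂)
    _ ≤ _ := by
        rw [integral_sqrt_gaussianPDFReal_mul_sqrt_gaussianPDFReal μ₁ μ₂ hσ₁ hσ₂]
        exact Real.sqrt_le_sqrt (one_sub_sq_gaussianBhattacharyya_le μ₁ μ₂ hσ₁ hσ₂)
end

section
/- Let N be a random variable on ℝ, (Y_j) i.i.d. real random variables independent of N, P a Poisson random variable with parameter λ > 0 independent of everything, and ε a Bernoulli random variable with parameter α = λe^{-λ} independent of N and Y₁. Let Q₁ be the law of N + Σ_{j=1}^P Y_j and Q₂ the law of N + εY₁. Then ‖Q₁ - Q₂‖_TV ≤ 2λ². -/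
open MeasureTheory

/-- `k`-fold convolution power of a measure on `ℝ` (law of the sum of `k` i.i.d. copies). -/
noncomputable def convPow (ν : Measure ℝ) : ℕ → Measure ℝ
  | 0 => Measure.dirac 0
  | k + 1 => (convPow ν k).conv ν

/-!
Writing `p k = e^{-λ} λ^k / k!` and `μ k` for the law of `N + Y₁ + ⋯ + Y_k`, we have
`Q₁ = ∑ p k • μ k` and `Q₂ = (1 - p 1) • μ 0 + p 1 • μ 1`. Since `∑ p k = 1`, the difference is
`∑_{k ≥ 2} p k • (μ k - μ 0)`, whose total variation is at most
`P(Poisson(λ) ≥ 2) = 1 - e^{-λ} - λe^{-λ} ≤ λ(1 - e^{-λ}) ≤ λ²`.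
-/

instance isProbabilityMeasure_convPow (ν : Measure ℝ) [IsProbabilityMeasure ν] (k : ℕ) :
    IsProbabilityMeasure (convPow ν k) := by
  induction k with
  | zero => rw [convPow]; infer_instance
  | succ k ih => rw [convPow]; infer_instance

lemma convPow_one (ν : Measure ℝ) [SFinite ν] : convPow ν 1 = ν := by
  simp [convPow]

lemma abs_tsum_mul_sub_le {p m : ℕ → ℝ} (hp : ∀ k, 0 ≤ p k) (hsum : HasSum p 1)
    (hm₀ : ∀ k, 0 ≤ m k) (hm₁ : ∀ k, m k ≤ 1) :
    |∑' k, p k * m k - ((1 - p 1) * m 0 + p 1 * m 1)| ≤ 1 - p 0 - p 1 := by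
  have hpm : Summable fun k => p k * m k :=
    .of_nonneg_of_le (fun k => mul_nonneg (hp k) (hm₀ k))
      (fun k => mul_le_of_le_one_right (hp k) (hm₁ k)) hsum.summable
  have hg : HasSum (fun k => p k * (m k - m 0)) (∑' k, p k * m k - m 0) := by
    simpa [mul_sub] using hpm.hasSum.sub (hsum.mul_right (m 0))
  have hg_tail := (hasSum_nat_add_iff' 2).2 hg
  have hp_tail : HasSum (fun k => p (k + 2)) (1 - p 0 - p 1) := by
    simpa [Finset.sum_range_succ, sub_sub] using (hasSum_nat_add_iff' 2).2 hsum
  have hbound : ∀ k, |p (k + 2) * (m (k + 2) - m 0)| ≤ p (k + 2) := fun k => by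
    rw [abs_mul, abs_of_nonneg (hp _)]
    exact mul_le_of_le_one_right (hp _) (abs_sub_le_iff.2
      ⟨by linarith [hm₁ (k + 2), hm₀ 0], by linarith [hm₀ (k + 2), hm₁ 0]⟩)
  have htail_eq : ∑' k, p k * m k - ((1 - p 1) * m 0 + p 1 * m 1) =
      ∑' k, p k * m k - m 0 - ∑ i ∈ Finset.range 2, p i * (m i - m 0) := by
    rw [Finset.sum_range_succ, Finset.sum_range_one]
    ring
  rw [htail_eq]
  exact abs_le.2 ⟨hasSum_le (fun k => neg_le_of_abs_le (hbound k)) hp_tail.neg hg_tail,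
    hasSum_le (fun k => le_of_abs_le (hbound k)) hg_tail hp_tail⟩

section Mixture

variable {α : Type*} [MeasurableSpace α]

lemma tvDist_le_of_forall {P Q : Measure α} {c : ℝ} (hc : 0 ≤ c)
    (h : ∀ A, MeasurableSet A → |P.real A - Q.real A| ≤ c) : tvDist P Q ≤ c :=
  Real.iSup_le (fun A => h A.1 A.2) hc

lemma measureReal_sum_ofReal_smul {μ : ℕ → Measure α} [∀ k, IsFiniteMeasure (μ k)]
    {p : ℕ → ℝ} (hp : ∀ k, 0 ≤ p k) {A : Set α} (hA : MeasurableSet A) :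
    (Measure.sum fun k => ENNReal.ofReal (p k) • μ k).real A = ∑' k, p k * (μ k).real A := by
  rw [measureReal_def, Measure.sum_apply _ hA,
    ENNReal.tsum_toReal_eq fun k => by simp [ENNReal.mul_eq_top]]
  simp [measureReal_def, hp]

lemma tvDist_sum_smul_le_tail {μ : ℕ → Measure α} [∀ k, IsProbabilityMeasure (μ k)]
    {p : ℕ → ℝ} (hp : ∀ k, 0 ≤ p k) (hsum : HasSum p 1) :
    tvDist (Measure.sum fun k => ENNReal.ofReal (p k) • μ k)
      (ENNReal.ofReal (1 - p 1) • μ 0 + ENNReal.ofReal (p 1) • μ 1) ≤ 1 - p 0 - p 1 := by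
  have hp01 : p 0 + p 1 ≤ 1 := by
    simpa [Finset.sum_range_succ] using sum_le_hasSum (Finset.range 2) (fun k _ => hp k) hsum
  refine tvDist_le_of_forall (by linarith) fun A hA => ?_
  rw [measureReal_sum_ofReal_smul hp hA,
    measureReal_add_apply (by simp [ENNReal.mul_eq_top]) (by simp [ENNReal.mul_eq_top]),
    measureReal_ennreal_smul_apply, measureReal_ennreal_smul_apply,
    ENNReal.toReal_ofReal (by linarith [hp 0]), ENNReal.toReal_ofReal (hp 1)]
  exact abs_tsum_mul_sub_le hp hsum (fun _ => measureReal_nonneg) fun _ => measureReal_le_one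

end Mixture

lemma one_sub_exp_neg_sub_mul_exp_neg_le_sq {l : ℝ} (hl : 0 ≤ l) :
    1 - Real.exp (-l) - l * Real.exp (-l) ≤ l ^ 2 := by
  nlinarith [Real.add_one_le_exp (-l), Real.exp_pos (-l)]

/-- Let `N` have law `νN`, `(Y_j)` i.i.d. with law `νY` independent of `N`, `P` Poisson
with parameter `λ > 0` independent of everything, `ε` Bernoulli with parameter
`α = λe^{-λ}` independent of `N` and `Y₁`.  The law `Q₁` of `N + Σ_{j=1}^P Y_j` is the
Poisson mixture of convolution powers, and the law `Q₂` of `N + εY₁` is the Bernoulli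
mixture; then `‖Q₁ - Q₂‖_TV ≤ 2λ²`. -/
theorem tvDist_compoundPoisson_bernoulli (νN νY : Measure ℝ)
    [IsProbabilityMeasure νN] [IsProbabilityMeasure νY] (l : ℝ) (hl : 0 < l) :
    tvDist
      (Measure.sum fun k : ℕ =>
        (ENNReal.ofReal (Real.exp (-l) * l ^ k / (Nat.factorial k))) •
          (νN.conv (convPow νY k)))
      (ENNReal.ofReal (1 - l * Real.exp (-l)) • νN +
        ENNReal.ofReal (l * Real.exp (-l)) • (νN.conv νY)) ≤ 2 * l ^ 2 := by
  have hmixture := tvDist_sum_smul_le_tail (μ := fun k => νN.conv (convPow νY k))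
    (p := fun k => Real.exp (-l) * l ^ k / (Nat.factorial k)) (fun k => by positivity)
    (ProbabilityTheory.hasSum_one_poissonMeasure ⟨l, hl.le⟩)
  simp only [pow_zero, pow_one, Nat.factorial_zero, Nat.factorial_one, Nat.cast_one, div_one,
    mul_one, mul_comm (Real.exp (-l)) l, convPow.eq_1, Measure.conv_dirac_zero, convPow_one]
    at hmixture
  calc _ ≤ _ := hmixture
    _ ≤ l ^ 2 := one_sub_exp_neg_sub_mul_exp_neg_le_sq hl.le
    _ ≤ 2 * l ^ 2 := by linarith [sq_nonneg l]
end

section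
/- Let N ~ N(m, σ²) with |m| ≤ 1/3, α ∈ [0,1], and Y a discrete random variable taking values in ℤ independent of N. Let ε be Bernoulli(α) independent of (N, Y), and let Q be the law of N + εY. Define the Markov kernel K(x, A) = 1_A(x - [x]), where [x] is the nearest integer to x. Then ‖KQ - law(N)‖_TV ≤ (6/σ)φ(1/(6σ)) + 4Φ(-1/(6σ)), where φ and Φ are the standard normal density and CDF. -/
/-!
The map `x ↦ x - [x]` is invariant under integer translations, so it sends the mixture `Q`
and `N(m, σ²)` to the same law. It also fixes every point of `(m - 1/6, m + 1/6)`, which lies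
in `(-1/2, 1/2)`, so that law differs from `N(m, σ²)` by at most the Gaussian mass outside
this window, `2Φ(-1/(6σ))`.
-/

open MeasureTheory ProbabilityTheory

/-- Standard normal density. -/
noncomputable def stdNormalPDF (t : ℝ) : ℝ :=
  (Real.sqrt (2 * Real.pi))⁻¹ * Real.exp (-t ^ 2 / 2)

/-- Standard normal cumulative distribution function. -/
noncomputable def stdNormalCDF (t : ℝ) : ℝ := ∫ u in Set.Iic t, stdNormalPDF u

open Set

lemma measurable_round : Measurable (round : ℝ → ℤ) := by
  simp_rw [funext round_eq]
  exact (measurable_add_const _).floor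

section Round

variable {α : Type*} [Field α] [LinearOrder α] [IsStrictOrderedRing α] [FloorRing α]

lemma sub_round_eq_self {x : α} (hx : x ∈ Ico (-(1 / 2)) (1 / 2)) : x - round x = x := by
  simp [round_eq_zero_iff.2 hx]

lemma add_intCast_sub_round (x : α) (k : ℤ) : x + k - round (x + k) = x - round x := by
  rw [round_add_intCast]
  push_cast
  ring

end Round

namespace MeasureTheory.Measure

lemma map_conv_map_intCast {β : Type*} [MeasurableSpace β] {g : ℝ → β} (hg : Measurable g)
    (hper : ∀ x (k : ℤ), g (x + k) = g x) (μ : Measure ℝ) [SFinite μ] (ν : Measure ℤ)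
    [IsProbabilityMeasure ν] :
    (μ ∗ ν.map ((↑) : ℤ → ℝ)).map g = μ.map g := by
  have hcast : Measurable ((↑) : ℤ → ℝ) := measurable_from_top
  have hprod : μ.prod (ν.map (↑)) = (μ.prod ν).map (Prod.map id ((↑) : ℤ → ℝ)) := by
    simpa using map_prod_map μ ν measurable_id hcast
  have hg_fst :
      (g ∘ fun p : ℝ × ℝ => p.1 + p.2) ∘ Prod.map id ((↑) : ℤ → ℝ) = g ∘ Prod.fst := by
    ext ⟨x, k⟩
    exact hper x k
  rw [conv, hprod, map_map hg measurable_add, map_map (hg.comp measurable_add)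
    (measurable_id.prodMap hcast), hg_fst, ← map_map hg measurable_fst, map_fst_prod,
    measure_univ, one_smul]

lemma map_smul_add_smul_of_map_eq {α β : Type*} [MeasurableSpace α] [MeasurableSpace β]
    {g : α → β} (hg : Measurable g) {μ ρ : Measure α} (h : ρ.map g = μ.map g) {a : ℝ}
    (ha : a ∈ Icc (0 : ℝ) 1) :
    (ENNReal.ofReal (1 - a) • μ + ENNReal.ofReal a • ρ).map g = μ.map g := by
  rw [Measure.map_add _ _ hg, Measure.map_smul, Measure.map_smul, h, ← add_smul,
    ← ENNReal.ofReal_add (by linarith [ha.2]) ha.1, sub_add_cancel, ENNReal.ofReal_one, one_smul]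

end MeasureTheory.Measure

lemma tvDist_map_le_measureReal_compl {α : Type*} [MeasurableSpace α] {P : Measure α}
    [IsFiniteMeasure P] {f : α → α} (hf : Measurable f) {s : Set α} (hfs : EqOn f id sᶜ) :
    tvDist (P.map f) P ≤ P.real s := by
  refine Real.iSup_le (fun ⟨A, hA⟩ => ?_) measureReal_nonneg
  have hagree : ∀ x ∈ sᶜ, x ∈ f ⁻¹' A ↔ x ∈ A := fun x hx => by simp [hfs hx]
  have hsub : ∀ {t u : Set α}, (∀ x ∈ sᶜ, x ∈ t → x ∈ u) → t ⊆ u ∪ s := fun h x hx => by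
    by_cases hxs : x ∈ s
    exacts [Or.inr hxs, Or.inl (h x hxs hx)]
  rw [← measureReal_def, ← measureReal_def, map_measureReal_apply hf hA, abs_sub_le_iff,
    sub_le_iff_le_add', sub_le_iff_le_add']
  exact ⟨(measureReal_mono (hsub fun x hx => (hagree x hx).1)).trans (measureReal_union_le _ _),
    (measureReal_mono (hsub fun x hx => (hagree x hx).2)).trans (measureReal_union_le _ _)⟩

lemma stdNormalPDF_nonneg (t : ℝ) : 0 ≤ stdNormalPDF t := by
  unfold stdNormalPDF
  positivity

lemma stdNormalCDF_nonneg (t : ℝ) : 0 ≤ stdNormalCDF t :=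
  setIntegral_nonneg measurableSet_Iic fun x _ => stdNormalPDF_nonneg x

lemma gaussianReal_zero_one_Iic (t : ℝ) :
    gaussianReal 0 1 (Iic t) = ENNReal.ofReal (stdNormalCDF t) := by
  rw [gaussianReal_apply_eq_integral 0 one_ne_zero, stdNormalCDF]
  congr with u
  simp [gaussianPDFReal, stdNormalPDF]

lemma gaussianReal_eq_map_affine (m σ : ℝ) :
    gaussianReal m ⟨σ ^ 2, sq_nonneg σ⟩ = (gaussianReal 0 1).map (fun x => σ * x + m) := by
  have hcomp : (fun x => σ * x + m) = (· + m) ∘ (σ * ·) := rfl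
  rw [hcomp, ← Measure.map_map (measurable_add_const m) (measurable_const_mul σ),
    gaussianReal_map_const_mul, gaussianReal_map_add_const]
  congr <;> simp

lemma measureReal_gaussianReal_Iic {m σ : ℝ} (hσ : 0 < σ) (t : ℝ) :
    (gaussianReal m ⟨σ ^ 2, sq_nonneg σ⟩).real (Iic (m + σ * t)) = stdNormalCDF t := by
  have hpre : (fun x => σ * x + m) ⁻¹' Iic (m + σ * t) = Iic t := by
    ext x
    simp [add_comm m, mul_le_mul_iff_right₀ hσ]
  rw [measureReal_def, gaussianReal_eq_map_affine,
    Measure.map_apply (by fun_prop) measurableSet_Iic, hpre, gaussianReal_zero_one_Iic,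
    ENNReal.toReal_ofReal (stdNormalCDF_nonneg t)]

lemma measureReal_gaussianReal_Ici {m σ : ℝ} (hσ : 0 < σ) (t : ℝ) :
    (gaussianReal m ⟨σ ^ 2, sq_nonneg σ⟩).real (Ici (m + σ * t)) = stdNormalCDF (-t) := by
  have hpre : (fun x => -x) ⁻¹' Iic (-m + σ * -t) = Ici (m + σ * t) := by
    ext x
    simp only [mem_preimage, mem_Iic, mem_Ici]
    constructor <;> intro h <;> linarith
  rw [← measureReal_gaussianReal_Iic (m := -m) hσ,
    ← gaussianReal_map_neg (μ := m) (v := ⟨σ ^ 2, sq_nonneg σ⟩),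
    map_measureReal_apply measurable_neg measurableSet_Iic, hpre]

/-- Let `N ~ N(m, σ²)` with `|m| ≤ 1/3`, `α ∈ [0,1]`, `Y` a `ℤ`-valued random variable
(of law the pushforward of `νZ` under `Int.cast`) independent of `N`, and `ε` a
Bernoulli(`α`) independent of `(N, Y)`; the law `Q` of `N + εY` is the mixture
`(1-α)•N(m,σ²) + α•(N(m,σ²) ∗ νY)`.  With the rounding kernel `K(x,A) = 1_A(x - [x])`,
`‖KQ - N(m,σ²)‖_TV ≤ (6/σ)φ(1/(6σ)) + 4Φ(-1/(6σ))`. -/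
theorem tvDist_rounding_kernel (m σ a : ℝ) (hσ : 0 < σ) (hm : |m| ≤ 1 / 3)
    (ha : a ∈ Set.Icc (0 : ℝ) 1) (νZ : Measure ℤ) [IsProbabilityMeasure νZ] :
    tvDist
      (Measure.map (fun x : ℝ => x - (round x : ℝ))
        (ENNReal.ofReal (1 - a) • gaussianReal m ⟨σ ^ 2, sq_nonneg σ⟩ +
          ENNReal.ofReal a •
            ((gaussianReal m ⟨σ ^ 2, sq_nonneg σ⟩).conv
              (Measure.map (fun k : ℤ => (k : ℝ)) νZ))))
      (gaussianReal m ⟨σ ^ 2, sq_nonneg σ⟩) ≤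
    (6 / σ) * stdNormalPDF (1 / (6 * σ)) + 4 * stdNormalCDF (-1 / (6 * σ)) := by
  set μ := gaussianReal m ⟨σ ^ 2, sq_nonneg σ⟩
  have : IsProbabilityMeasure μ := instIsProbabilityMeasureGaussianReal m _
  set f : ℝ → ℝ := fun x => x - round x
  have hf : Measurable f := measurable_id.sub (measurable_from_top.comp measurable_round)
  have hfix : EqOn f id (Iic (m - 1 / 6) ∪ Ici (m + 1 / 6))ᶜ := by
    intro x hx
    simp only [mem_compl_iff, mem_union, mem_Iic, mem_Ici, not_or, not_le] at hx
    exact sub_round_eq_self ⟨by linarith [hx.1, neg_abs_le m], by linarith [hx.2, le_abs_self m]⟩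
  have hδ : 1 / 6 = σ * (1 / (6 * σ)) := by field_simp
  calc _ = tvDist (μ.map f) μ := by
        rw [Measure.map_smul_add_smul_of_map_eq hf
          (Measure.map_conv_map_intCast hf add_intCast_sub_round μ νZ) ha]
    _ ≤ μ.real (Iic (m - 1 / 6) ∪ Ici (m + 1 / 6)) := tvDist_map_le_measureReal_compl hf hfix
    _ ≤ μ.real (Iic (m - 1 / 6)) + μ.real (Ici (m + 1 / 6)) := measureReal_union_le _ _
    _ = 2 * stdNormalCDF (-1 / (6 * σ)) := by
        rw [sub_eq_add_neg, hδ, ← mul_neg, measureReal_gaussianReal_Iic hσ,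
          measureReal_gaussianReal_Ici hσ, neg_div]
        ring
    _ ≤ _ := by
        have : 0 ≤ 6 / σ * stdNormalPDF (1 / (6 * σ)) :=
          mul_nonneg (by positivity) (stdNormalPDF_nonneg _)
        linarith [stdNormalCDF_nonneg (-1 / (6 * σ))]
end

section
/- Let 0 = t₀ < t₁ < … < t_n = T, f continuous on [0,T], σ > 0 measurable. For each i choose γ_i, η_i ∈ [t_{i-1}, t_i] with ∫_{t_{i-1}}^{t_i} f = f(γ_i)(t_i - t_{i-1}) and ∫_{t_{i-1}}^{t_i} σ² = σ²(η_i)(t_i - t_{i-1}). Then Σ_{i=1}^n (f(t_i) - f(γ_i))²/(2σ²(η_i)) · (t_i - t_{i-1}) ≤ ∫_0^T (f(s) - f̄_n(s))²/(2σ²(s)) ds, where f̄_n(t) = f(t_i) for t ∈ [t_{i-1}, t_i). -/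
/-!
On each cell `[tᵢ₋₁, tᵢ]` the discretization `f̄` is the constant `f(tᵢ)` (up to a null set), and
the mean-value identities turn the `i`-th summand into
`(∫ (f - f(tᵢ)))² / (2 ∫ σ²)`. The weighted Cauchy–Schwarz inequality
`(∫ g)² ≤ (∫ g² / σ²) (∫ σ²)` bounds this by `∫ (f - f̄)² / (2σ²)` over the cell, and the cell
integrals add up to the integral over `[0, T]`.
-/

open MeasureTheory Set

theorem two_mul_mul_sub_sq_mul_le_sq_div {w : ℝ} (hw : 0 < w) (c x : ℝ) :
    2 * c * x - c ^ 2 * w ≤ x ^ 2 / w := by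
  rw [le_div_iff₀ hw]
  nlinarith [sq_nonneg (x - c * w)]

theorem sq_integral_div_le_integral_sq_div {a b : ℝ} (hab : a ≤ b) {g w : ℝ → ℝ}
    (hw : ∀ s ∈ Ioo a b, 0 < w s) (hg : IntervalIntegrable g volume a b)
    (hw_int : IntervalIntegrable w volume a b)
    (hgw : IntervalIntegrable (fun s => g s ^ 2 / w s) volume a b) :
    (∫ s in a..b, g s) ^ 2 / (∫ s in a..b, w s) ≤ ∫ s in a..b, g s ^ 2 / w s := by
  set G := ∫ s in a..b, g s
  set W := ∫ s in a..b, w s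
  -- integrate the pointwise bound `2 c g - c² w ≤ g² / w` at the optimal `c = G / W`
  set c := G / W
  calc G ^ 2 / W = 2 * c * G - c ^ 2 * W := by
        rcases eq_or_ne W 0 with hW | hW
        · simp [c, hW]
        · simp only [c]; field_simp; ring
    _ = ∫ s in a..b, (2 * c * g s - c ^ 2 * w s) := by
        rw [intervalIntegral.integral_sub (hg.const_mul _) (hw_int.const_mul _),
          intervalIntegral.integral_const_mul, intervalIntegral.integral_const_mul]
    _ ≤ ∫ s in a..b, g s ^ 2 / w s :=
        intervalIntegral.integral_mono_on_of_le_Ioo hab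
          ((hg.const_mul _).sub (hw_int.const_mul _)) hgw
          fun s hs => two_mul_mul_sub_sq_mul_le_sq_div (hw s hs) _ _

theorem sum_integral_fin_adjacent_intervals {E : Type*} [NormedAddCommGroup E] [NormedSpace ℝ E]
    {μ : Measure ℝ} {g : ℝ → E} {n : ℕ} {t : Fin (n + 1) → ℝ}
    (hg : ∀ i : Fin n, IntervalIntegrable g μ (t i.castSucc) (t i.succ)) :
    ∑ i : Fin n, ∫ x in t i.castSucc..t i.succ, g x ∂μ = ∫ x in t 0..t (Fin.last n), g x ∂μ := by
  have hclamp : ∀ i : Fin n, Fin.clamp i n = i.castSucc ∧ Fin.clamp (i + 1) n = i.succ :=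
    fun i => ⟨Fin.ext (by simp [i.isLt.le]), Fin.ext (by simp [Nat.succ_le_of_lt i.isLt])⟩
  have hsum := intervalIntegral.sum_integral_adjacent_intervals (μ := μ) (f := g)
    (a := fun k => t (Fin.clamp k n)) (n := n) fun k hk => by
      simpa only [hclamp ⟨k, hk⟩] using hg ⟨k, hk⟩
  have h0 : Fin.clamp 0 n = 0 := Fin.ext (by simp)
  have hn : Fin.clamp n n = Fin.last n := Fin.ext (by simp)
  rw [← h0, ← hn, ← hsum, ← Fin.sum_univ_eq_sum_range]
  simp only [hclamp]

theorem sq_sub_mean_div_mul_le_integral {a b c m v : ℝ} (hab : a < b) {f σ h : ℝ → ℝ}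
    (hσ : ∀ s ∈ Ioo a b, 0 < σ s) (hh : EqOn h (fun _ => c) (Ioo a b))
    (hf : IntervalIntegrable f volume a b)
    (hσ_int : IntervalIntegrable (fun s => σ s ^ 2) volume a b)
    (hfh : IntervalIntegrable (fun s => (f s - h s) ^ 2 / (2 * σ s ^ 2)) volume a b)
    (hm : ∫ s in a..b, f s = m * (b - a)) (hv : ∫ s in a..b, σ s ^ 2 = v * (b - a)) :
    (c - m) ^ 2 / (2 * v) * (b - a) ≤ ∫ s in a..b, (f s - h s) ^ 2 / (2 * σ s ^ 2) := by
  have heq : EqOn (fun s => (f s - h s) ^ 2 / (2 * σ s ^ 2))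
      (fun s => (f s - c) ^ 2 / (2 * σ s ^ 2)) (uIoo a b) := fun s hs => by
    rw [uIoo_of_le hab.le] at hs
    simp only [hh hs]
  have hmean : ∫ s in a..b, (f s - c) = (m - c) * (b - a) := by
    rw [intervalIntegral.integral_sub hf intervalIntegrable_const, hm,
      intervalIntegral.integral_const, smul_eq_mul]
    ring
  have hCS := sq_integral_div_le_integral_sq_div (w := fun s => 2 * σ s ^ 2) hab.le
    (fun s hs => by have := hσ s hs; positivity) (hf.sub intervalIntegrable_const)
    (hσ_int.const_mul 2) (hfh.congr_uIoo heq)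
  rw [hmean, intervalIntegral.integral_const_mul, hv,
    ← intervalIntegral.integral_congr_uIoo heq] at hCS
  calc (c - m) ^ 2 / (2 * v) * (b - a)
      = ((m - c) * (b - a)) ^ 2 / (2 * (v * (b - a))) := by
        have : b - a ≠ 0 := (sub_pos.2 hab).ne'
        field_simp
        ring
    _ ≤ _ := hCS

theorem riemann_sum_le_weighted_L2_general {n : ℕ} (T : ℝ) (t : Fin (n + 1) → ℝ)
    (ht : StrictMono t) (ht0 : t 0 = 0) (htn : t (Fin.last n) = T)
    (f σ fbar : ℝ → ℝ) (hf : ContinuousOn f (Set.Icc 0 T))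
    (hσpos : ∀ s ∈ Set.Icc 0 T, 0 < σ s)
    (γ η : Fin n → ℝ)
    (hγ : ∀ i : Fin n, ∫ s in (t i.castSucc)..(t i.succ), f s =
      f (γ i) * (t i.succ - t i.castSucc))
    (hη : ∀ i : Fin n, ∫ s in (t i.castSucc)..(t i.succ), σ s ^ 2 =
      σ (η i) ^ 2 * (t i.succ - t i.castSucc))
    (hfbar : ∀ i : Fin n, ∀ s ∈ Set.Ico (t i.castSucc) (t i.succ), fbar s = f (t i.succ))
    (hint : IntervalIntegrable (fun s => (f s - fbar s) ^ 2 / (2 * σ s ^ 2))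
      MeasureTheory.volume 0 T)
    (hσint : IntervalIntegrable (fun s => σ s ^ 2) MeasureTheory.volume 0 T) :
    ∑ i : Fin n, (f (t i.succ) - f (γ i)) ^ 2 / (2 * σ (η i) ^ 2) *
        (t i.succ - t i.castSucc) ≤
      ∫ s in (0 : ℝ)..T, (f s - fbar s) ^ 2 / (2 * σ s ^ 2) := by
  have ht_mem : ∀ j, t j ∈ Icc 0 T := fun j =>
    ⟨ht0 ▸ ht.monotone (Fin.zero_le j), htn ▸ ht.monotone (Fin.le_last j)⟩
  have hlt : ∀ i : Fin n, t i.castSucc < t i.succ := fun i => ht i.castSucc_lt_succ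
  have hIcc : ∀ i : Fin n, Icc (t i.castSucc) (t i.succ) ⊆ Icc 0 T := fun i =>
    Icc_subset_Icc (ht_mem _).1 (ht_mem _).2
  have huIcc : ∀ i : Fin n, uIcc (t i.castSucc) (t i.succ) ⊆ uIcc 0 T := fun i =>
    uIcc_subset_uIcc (Icc_subset_uIcc (ht_mem _)) (Icc_subset_uIcc (ht_mem _))
  calc ∑ i : Fin n, (f (t i.succ) - f (γ i)) ^ 2 / (2 * σ (η i) ^ 2) * (t i.succ - t i.castSucc)
      ≤ ∑ i : Fin n, ∫ s in (t i.castSucc)..(t i.succ), (f s - fbar s) ^ 2 / (2 * σ s ^ 2) :=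
        Finset.sum_le_sum fun i _ => sq_sub_mean_div_mul_le_integral (hlt i)
          (fun s hs => hσpos s (hIcc i (Ioo_subset_Icc_self hs)))
          (fun s hs => hfbar i s (Ioo_subset_Ico_self hs))
          ((hf.mono (hIcc i)).intervalIntegrable_of_Icc (hlt i).le)
          (hσint.mono_set (huIcc i)) (hint.mono_set (huIcc i)) (hγ i) (hη i)
    _ = ∫ s in (0 : ℝ)..T, (f s - fbar s) ^ 2 / (2 * σ s ^ 2) := by
        rw [sum_integral_fin_adjacent_intervals fun i => hint.mono_set (huIcc i), ht0, htn]

/-- Let `0 = t₀ < … < t_n = T`, `f` continuous on `[0,T]`, `σ > 0` measurable.  If for each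
`i` the points `γ_i, η_i ∈ [t_{i-1}, t_i]` satisfy the mean-value identities
`∫_{t_{i-1}}^{t_i} f = f(γ_i)(t_i - t_{i-1})` and `∫_{t_{i-1}}^{t_i} σ² = σ²(η_i)(t_i - t_{i-1})`,
and `f̄_n` is the piecewise-constant discretization (`f̄_n = f(t_i)` on `[t_{i-1}, t_i)`,
`f̄_n(T) = f(T)`), then
`Σᵢ (f(t_i) - f(γ_i))²/(2σ²(η_i)) · (t_i - t_{i-1}) ≤ ∫_0^T (f(s) - f̄_n(s))²/(2σ²(s)) ds`. -/
theorem riemann_sum_le_weighted_L2 {n : ℕ} (T : ℝ) (t : Fin (n + 1) → ℝ)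
    (ht : StrictMono t) (ht0 : t 0 = 0) (htn : t (Fin.last n) = T)
    (f σ fbar : ℝ → ℝ) (hf : ContinuousOn f (Set.Icc 0 T)) (hσmeas : Measurable σ)
    (hσpos : ∀ s ∈ Set.Icc 0 T, 0 < σ s)
    (γ η : Fin n → ℝ)
    (hγmem : ∀ i : Fin n, γ i ∈ Set.Icc (t i.castSucc) (t i.succ))
    (hηmem : ∀ i : Fin n, η i ∈ Set.Icc (t i.castSucc) (t i.succ))
    (hγ : ∀ i : Fin n, ∫ s in (t i.castSucc)..(t i.succ), f s =
      f (γ i) * (t i.succ - t i.castSucc))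
    (hη : ∀ i : Fin n, ∫ s in (t i.castSucc)..(t i.succ), σ s ^ 2 =
      σ (η i) ^ 2 * (t i.succ - t i.castSucc))
    (hfbar : ∀ i : Fin n, ∀ s ∈ Set.Ico (t i.castSucc) (t i.succ), fbar s = f (t i.succ))
    (hfbarT : fbar T = f T)
    (hint : IntervalIntegrable (fun s => (f s - fbar s) ^ 2 / (2 * σ s ^ 2))
      MeasureTheory.volume 0 T)
    (hσint : IntervalIntegrable (fun s => σ s ^ 2) MeasureTheory.volume 0 T) :
    ∑ i : Fin n, (f (t i.succ) - f (γ i)) ^ 2 / (2 * σ (η i) ^ 2) *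
        (t i.succ - t i.castSucc) ≤
      ∫ s in (0 : ℝ)..T, (f s - fbar s) ^ 2 / (2 * σ s ^ 2) :=
  riemann_sum_le_weighted_L2_general T t ht ht0 htn f σ fbar hf hσpos γ η hγ hη hfbar hint hσint
end
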